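/- arXiv:1308.1299 — 4 statements merged into one kernel-verified Lean document; each statement's English description precedes it below -/
import Mathlib

section
/- Let Δ be a simplicial complex on [n]. If 𝒞 = C_1 ⊔ ⋯ ⊔ C_k is a nested colouring of Δ, then 𝒞 is a nested colouring of the underlying graph G_Δ, and the converse holds when Δ is a flag complex. In particular, the nested chromatic number satisfies χ_N(Δ) ≥ χ_N(G_Δ), with equality when Δ is flag. -/
open MvPolynomial

/-- A simplicial complex on a vertex type `V`: a collection of finite subsets (faces)
containing the empty set and closed under taking subsets. -/
structure SimpComplex (V : Type) where
  faces : Set (Finset V)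
  empty_mem : ∅ ∈ faces
  down_closed : ∀ {σ τ : Finset V}, σ ∈ faces → τ ⊆ σ → τ ∈ faces

namespace SimpComplex

variable {V : Type}

/-- `A` is an independent set of `Δ`: no two distinct members lie in a common face. -/
def IsIndep (Δ : SimpComplex V) (A : Set V) : Prop :=
  ∀ u ∈ A, ∀ v ∈ A, u ≠ v → ∀ σ ∈ Δ.faces, ¬(u ∈ σ ∧ v ∈ σ)

/-- The link of a vertex `v` in `Δ`. -/
def link [DecidableEq V] (Δ : SimpComplex V) (v : V) : Set (Finset V) :=
  {τ | τ ∈ Δ.faces ∧ v ∉ τ ∧ insert v τ ∈ Δ.faces}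

end SimpComplex

/-- A family of finsets indexed by `Fin k` is a partition of the vertex set. -/
def IsPartition {V : Type} {k : ℕ} (C : Fin k → Finset V) : Prop :=
  ∀ v : V, ∃! i, v ∈ C i

/-- A proper vertex `k`-colouring of a simplicial complex: a partition into independent sets. -/
def IsProperColouring {V : Type} {k : ℕ} (Δ : SimpComplex V) (C : Fin k → Finset V) : Prop :=
  IsPartition C ∧ ∀ i, Δ.IsIndep (C i : Set V)

/-- The underlying graph (1-skeleton) of a simplicial complex. -/
def SimpComplex.underlyingGraph {V : Type} [DecidableEq V] (Δ : SimpComplex V) :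
    SimpleGraph V where
  Adj u v := u ≠ v ∧ ({u, v} : Finset V) ∈ Δ.faces
  symm := by
    constructor
    intro u v h
    exact ⟨h.1.symm, by rw [Finset.pair_comm]; exact h.2⟩
  loopless := by
    constructor
    intro v h
    exact h.1 rfl

/-- `A` is an independent set of the graph `G`: it contains no edge. -/
def GraphIndep {V : Type} (G : SimpleGraph V) (A : Set V) : Prop :=
  ∀ u ∈ A, ∀ v ∈ A, ¬ G.Adj u v

/-- `A` is a nested independent set of `Δ`: it is independent and its members can be
linearly ordered so that earlier vertices have larger links. -/
def IsNestedSet {V : Type} [DecidableEq V] (Δ : SimpComplex V) (A : Set V) : Prop :=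
  Δ.IsIndep A ∧ ∃ l : List V, l.Nodup ∧ (∀ v, v ∈ l ↔ v ∈ A) ∧
    l.Pairwise (fun v u => Δ.link u ⊆ Δ.link v)

/-- `A` is a nested independent set of the graph `G`: it is independent and its members
can be linearly ordered so that earlier vertices have larger neighbourhoods. -/
def IsGraphNestedSet {V : Type} (G : SimpleGraph V) (A : Set V) : Prop :=
  GraphIndep G A ∧ ∃ l : List V, l.Nodup ∧ (∀ v, v ∈ l ↔ v ∈ A) ∧
    l.Pairwise (fun v u => G.neighborSet u ⊆ G.neighborSet v)

/-- The nested chromatic number of a simplicial complex. -/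
noncomputable def SimpComplex.nestedChromaticNumber {n : ℕ} (Δ : SimpComplex (Fin n)) : ℕ :=
  sInf {k | ∃ C : Fin k → Finset (Fin n), IsPartition C ∧
    ∀ i, IsNestedSet Δ (C i : Set (Fin n))}

/-- The nested chromatic number of a graph. -/
noncomputable def graphNestedChromaticNumber {n : ℕ} (G : SimpleGraph (Fin n)) : ℕ :=
  sInf {k | ∃ C : Fin k → Finset (Fin n), IsPartition C ∧
    ∀ i, IsGraphNestedSet G (C i : Set (Fin n))}

/-- `Δ` is a flag complex: its faces are exactly the cliques of its underlying graph. -/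
def SimpComplex.IsFlag {V : Type} [DecidableEq V] (Δ : SimpComplex V) : Prop :=
  ∀ σ : Finset V, σ ∈ Δ.faces ↔ Δ.underlyingGraph.IsClique (σ : Set V)

/-!
A link records the edges at a vertex through its singleton faces: `{w} ∈ link u` iff `uw` is an
edge, so `link u ⊆ link v` forces `N(u) ⊆ N(v)`. In a flag complex, `τ ∈ link u` iff `τ` is a clique
inside `N(u)`, so `N(u) ⊆ N(v)` gives back `link u ⊆ link v`. Hence nested colourings of `Δ` are
nested colourings of `G_Δ`, with equality of the two notions when `Δ` is flag.
-/

namespace SimpComplex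

variable {V : Type} [DecidableEq V] {Δ : SimpComplex V}

theorem IsIndep.graphIndep {A : Set V} (h : Δ.IsIndep A) : GraphIndep Δ.underlyingGraph A :=
  fun u hu v hv hadj => h u hu v hv hadj.1 {u, v} hadj.2 ⟨by simp, by simp⟩

theorem IsFlag.isIndep_iff_graphIndep (hflag : Δ.IsFlag) {A : Set V} :
    Δ.IsIndep A ↔ GraphIndep Δ.underlyingGraph A :=
  ⟨IsIndep.graphIndep, fun h u hu v hv huv σ hσ ⟨huσ, hvσ⟩ =>
    h u hu v hv ((hflag σ).1 hσ huσ hvσ huv)⟩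

theorem mem_link_singleton_iff {u w : V} : {w} ∈ Δ.link u ↔ Δ.underlyingGraph.Adj u w := by
  refine ⟨fun ⟨_, hu, hface⟩ => ⟨fun h => hu (h ▸ Finset.mem_singleton_self u), hface⟩,
    fun ⟨hne, hface⟩ => ⟨Δ.down_closed hface (by simp), by simpa [eq_comm] using hne, hface⟩⟩

theorem neighborSet_subset_of_link_subset {u v : V} (h : Δ.link u ⊆ Δ.link v) :
    Δ.underlyingGraph.neighborSet u ⊆ Δ.underlyingGraph.neighborSet v :=
  fun _ hw => mem_link_singleton_iff.1 (h (mem_link_singleton_iff.2 hw))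

theorem IsFlag.link_subset_iff_neighborSet_subset (hflag : Δ.IsFlag) {u v : V} :
    Δ.link u ⊆ Δ.link v ↔
      Δ.underlyingGraph.neighborSet u ⊆ Δ.underlyingGraph.neighborSet v := by
  refine ⟨neighborSet_subset_of_link_subset, fun h τ ⟨hτ, huτ, hface⟩ => ?_⟩
  have hu := SimpleGraph.isClique_insert.1 (Finset.coe_insert u τ ▸ (hflag _).1 hface)
  have hv : ∀ w ∈ τ, Δ.underlyingGraph.Adj v w := fun w hw =>
    h (hu.2 w hw fun huw => huτ (huw ▸ hw))
  refine ⟨hτ, fun hvτ => (hv v hvτ).ne rfl, (hflag _).2 ?_⟩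
  exact Finset.coe_insert v τ ▸ SimpleGraph.isClique_insert.2 ⟨hu.1, fun w hw _ => hv w hw⟩

theorem IsFlag.isNestedSet_iff (hflag : Δ.IsFlag) {A : Set V} :
    IsNestedSet Δ A ↔ IsGraphNestedSet Δ.underlyingGraph A := by
  simp only [IsNestedSet, IsGraphNestedSet, hflag.isIndep_iff_graphIndep,
    hflag.link_subset_iff_neighborSet_subset]

end SimpComplex

theorem IsNestedSet.isGraphNestedSet {V : Type} [DecidableEq V] {Δ : SimpComplex V} {A : Set V}
    (h : IsNestedSet Δ A) : IsGraphNestedSet Δ.underlyingGraph A :=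
  let ⟨hA, l, hnd, hl, hp⟩ := h
  ⟨hA.graphIndep, l, hnd, hl, hp.imp SimpComplex.neighborSet_subset_of_link_subset⟩

theorem SimpComplex.exists_nested_colouring_singletons {n : ℕ} (Δ : SimpComplex (Fin n)) :
    ∃ C : Fin n → Finset (Fin n), IsPartition C ∧ ∀ i, IsNestedSet Δ (C i : Set (Fin n)) := by
  refine ⟨fun i => {i}, fun v => ⟨v, by simp, fun i hi => by simp_all⟩, fun i => ⟨?_, [i], ?_⟩⟩
  · intro u hu v hv huv
    simp_all
  · simp

/-- Lemma 3.4: every nested colouring of `Δ` is a nested colouring of the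
underlying graph `G_Δ`, the converse holds when `Δ` is flag, and consequently
`χ_N(Δ) ≥ χ_N(G_Δ)` with equality when `Δ` is flag. -/
theorem stmt2 {n : ℕ} (Δ : SimpComplex (Fin n)) :
    (∀ (k : ℕ) (C : Fin k → Finset (Fin n)), IsPartition C →
      (∀ i, IsNestedSet Δ (C i : Set (Fin n))) →
      (∀ i, IsGraphNestedSet Δ.underlyingGraph (C i : Set (Fin n)))) ∧
    (Δ.IsFlag → ∀ (k : ℕ) (C : Fin k → Finset (Fin n)), IsPartition C →
      (∀ i, IsGraphNestedSet Δ.underlyingGraph (C i : Set (Fin n))) →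
      (∀ i, IsNestedSet Δ (C i : Set (Fin n)))) ∧
    graphNestedChromaticNumber Δ.underlyingGraph ≤ Δ.nestedChromaticNumber ∧
    (Δ.IsFlag → Δ.nestedChromaticNumber = graphNestedChromaticNumber Δ.underlyingGraph) := by
  refine ⟨fun _ _ _ h i => (h i).isGraphNestedSet,
    fun hflag _ _ _ h i => hflag.isNestedSet_iff.2 (h i), ?_, fun hflag => ?_⟩
  · exact csInf_le_csInf' ⟨n, Δ.exists_nested_colouring_singletons⟩
      fun _ ⟨C, hC, hnested⟩ => ⟨C, hC, fun i => (hnested i).isGraphNestedSet⟩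
  · simp only [SimpComplex.nestedChromaticNumber, graphNestedChromaticNumber,
      hflag.isNestedSet_iff]
end

section
/- Let Δ be a simplicial complex on [n] and let 𝒞 = C_1 ⊔ ⋯ ⊔ C_k be a nested colouring of Δ. If 𝒞′ and 𝒞″ are copies of 𝒞 endowed with (possibly distinct) nesting orders on the colour classes, then the uniform face ideals coincide: I(Δ, 𝒞′) = I(Δ, 𝒞″). -/
open MvPolynomial

/-- An ordered proper vertex `k`-colouring, given by a duplicate-free list (recording the
linear order) for each colour class; the classes partition the vertices and are independent. -/
def IsOrderedColouring {V : Type} {k : ℕ} (Δ : SimpComplex V) (C : Fin k → List V) : Prop :=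
  (∀ i, (C i).Nodup) ∧ (∀ v : V, ∃! i, v ∈ C i) ∧ (∀ i, Δ.IsIndep {v | v ∈ C i})

/-- The given linear orders on the colour classes are nesting orders: within a class,
if `v` comes before `u` then `link(u) ⊆ link(v)`.  (Thus the colouring is nested and is
endowed with the nesting order.) -/
def IsNestingOrdered {V : Type} [DecidableEq V] {k : ℕ} (Δ : SimpComplex V)
    (C : Fin k → List V) : Prop :=
  ∀ i, (C i).Pairwise (fun v u => Δ.link u ⊆ Δ.link v)

/-- The index vector of a set `σ` with respect to the ordered colouring `C`:
`eVec C σ i = j` iff the (unique) element of `σ ∩ C i` is the `j`-th element of the list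
`C i` (counting from 1), and `0` if `σ ∩ C i = ∅`. -/
def eVec {V : Type} [DecidableEq V] {k : ℕ} (C : Fin k → List V) (σ : Finset V)
    (i : Fin k) : ℕ :=
  if (C i).any (fun v => decide (v ∈ σ)) then
    (C i).findIdx (fun v => decide (v ∈ σ)) + 1
  else 0

/-- The uniform monomial of a face `σ`:  `∏ i, x_i ^ (#C_i - e_i(σ)) * y_i ^ (e_i(σ))`,
where `x_i = X (Sum.inl i)` and `y_i = X (Sum.inr i)`. -/
noncomputable def uniformMonomial (K : Type) [Field K] {V : Type} [DecidableEq V] {k : ℕ}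
    (C : Fin k → List V) (σ : Finset V) : MvPolynomial (Fin k ⊕ Fin k) K :=
  ∏ i : Fin k, (X (Sum.inl i) ^ ((C i).length - eVec C σ i) * X (Sum.inr i) ^ eVec C σ i)

/-- The uniform face ideal of `Δ` with respect to the ordered colouring `C`. -/
noncomputable def uniformFaceIdeal (K : Type) [Field K] {V : Type} [DecidableEq V] {k : ℕ}
    (Δ : SimpComplex V) (C : Fin k → List V) : Ideal (MvPolynomial (Fin k ⊕ Fin k) K) :=
  Ideal.span {m | ∃ σ ∈ Δ.faces, m = uniformMonomial K C σ}

/-!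
If `a` and `b` are two nesting orders of the same colour class, then among the first `j + 1`
vertices of `a` some vertex stands at a position `≥ j` in `b`, whence `link a[j] ⊆ link b[j]`.
Since `σ.erase v ∈ link v` for a face `σ ∋ v`, a vertex of a face may be replaced by any vertex
with a larger link; doing this for every vertex, each one replaced by the vertex in the same
position of the other order, gives a face whose index vector for the new orders is the old one.
So both ideals are generated by the same monomials.
-/

namespace List

theorem Pairwise.apply_getElem_le_of_le {α β : Type*} [Preorder β] {f : α → β} {l : List α}
    (h : l.Pairwise (fun v u => f u ≤ f v)) {i j : ℕ} (hij : i ≤ j) (hj : j < l.length) :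
    f l[j] ≤ f (l[i]'(hij.trans_lt hj)) := by
  obtain rfl | hlt := hij.eq_or_lt
  · rfl
  · exact pairwise_iff_getElem.1 h i j _ hj hlt

theorem apply_getElem_le_of_perm {α β : Type*} [Preorder β] {f : α → β} {a b : List α}
    (hab : a.Perm b) (ha : a.Nodup) (hfa : a.Pairwise (fun v u => f u ≤ f v))
    (hfb : b.Pairwise (fun v u => f u ≤ f v)) {j : ℕ} (hja : j < a.length)
    (hjb : j < b.length) : f a[j] ≤ f b[j] := by
  obtain ⟨w, hwa, hwb⟩ : ∃ w ∈ a.take (j + 1), w ∉ b.take j := by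
    by_contra! hsub
    have := ((ha.sublist (take_sublist _ _)).subperm hsub).length_le
    simp only [length_take] at this
    omega
  obtain ⟨m, hm, rfl⟩ := mem_take_iff_getElem.1 hwa
  have hwd : a[m] ∈ b.drop j := by
    have hwb' : a[m] ∈ b := hab.subset (getElem_mem _)
    rw [← take_append_drop j b, mem_append] at hwb'
    exact hwb'.resolve_left hwb
  obtain ⟨m', hm', hbm⟩ := mem_drop_iff_getElem.1 hwd
  calc f a[j] ≤ f a[m] := hfa.apply_getElem_le_of_le (by omega) hja
    _ = f b[j + m'] := by rw [hbm]
    _ ≤ f b[j] := hfb.apply_getElem_le_of_le (by omega) _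

end List

namespace SimpComplex

variable {V : Type} [DecidableEq V] (Δ : SimpComplex V)

theorem erase_mem_link {σ : Finset V} (hσ : σ ∈ Δ.faces) {v : V} (hv : v ∈ σ) :
    σ.erase v ∈ Δ.link v :=
  ⟨Δ.down_closed hσ (Finset.erase_subset _ _), Finset.notMem_erase _ _,
    by rwa [Finset.insert_erase hv]⟩

theorem sdiff_union_image_mem_faces (g : V → V) {τ F : Finset V} (hF : F ∈ Δ.faces)
    (hτF : τ ⊆ F) (hg : ∀ v ∈ τ, Δ.link v ⊆ Δ.link (g v)) : F \ τ ∪ τ.image g ∈ Δ.faces := by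
  induction τ using Finset.induction_on generalizing F with
  | empty => simpa using hF
  | insert a τ haτ ih =>
    obtain ⟨haF, hτF⟩ := Finset.insert_subset_iff.1 hτF
    obtain ⟨-, hgaF, hF'⟩ := hg a (Finset.mem_insert_self _ _) (Δ.erase_mem_link hF haF)
    have hτF' : τ ⊆ F.erase a := Finset.subset_erase.2 ⟨hτF, haτ⟩
    have hgaτ : g a ∉ τ := fun h => hgaF (hτF' h)
    convert ih hF' (hτF'.trans (Finset.subset_insert _ _))
      (fun v hv => hg v (Finset.mem_insert_of_mem hv)) using 1
    ext x
    simp only [Finset.mem_union, Finset.mem_sdiff, Finset.mem_insert, Finset.mem_erase,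
      Finset.mem_image]
    grind

theorem image_mem_faces (g : V → V) {σ : Finset V} (hσ : σ ∈ Δ.faces)
    (hg : ∀ v ∈ σ, Δ.link v ⊆ Δ.link (g v)) : σ.image g ∈ Δ.faces := by
  simpa using Δ.sdiff_union_image_mem_faces g hσ subset_rfl hg

end SimpComplex

section UniformFaceIdeal

variable {V : Type} [DecidableEq V] {k : ℕ}

theorem eVec_eq_of_map_eq {C C' : Fin k → List V} {σ σ' : Finset V} {i : Fin k}
    (h : (C i).map (fun v => decide (v ∈ σ)) = (C' i).map (fun v => decide (v ∈ σ'))) :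
    eVec C σ i = eVec C' σ' i := by
  have hany := congrArg (List.any · id) h
  have hfind := congrArg (List.findIdx id) h
  simp only [List.any_map, List.findIdx_map, Function.id_comp] at hany hfind
  simp only [eVec, hany, hfind]

theorem uniformMonomial_eq_of_eVec_eq (K : Type) [Field K] {C C' : Fin k → List V}
    {σ σ' : Finset V} (hlen : ∀ i, (C i).length = (C' i).length)
    (he : ∀ i, eVec C σ i = eVec C' σ' i) :
    uniformMonomial K C σ = uniformMonomial K C' σ' := by
  simp only [uniformMonomial, hlen, he]

/-- Sends the `j`-th vertex of `l₁ (c v)` to the `j`-th vertex of `l₂ (c v)`. -/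
def relabel (c : V → Fin k) (l₁ l₂ : Fin k → List V) (v : V) : V :=
  (l₂ (c v)).getD ((l₁ (c v)).idxOf v) v

variable {c : V → Fin k} {l₁ l₂ : Fin k → List V}

theorem relabel_getElem (hc : ∀ v i, v ∈ l₁ i ↔ c v = i) (hperm : ∀ i, (l₁ i).Perm (l₂ i))
    (hnd : ∀ i, (l₁ i).Nodup) {i : Fin k} {j : ℕ} (hj : j < (l₁ i).length) :
    relabel c l₁ l₂ (l₁ i)[j] = (l₂ i)[j]'((hperm i).length_eq ▸ hj) := by
  have hcol : c (l₁ i)[j] = i := (hc _ _).1 (List.getElem_mem hj)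
  simp only [relabel, hcol, (hnd i).idxOf_getElem]
  exact List.getD_eq_getElem _ _ _

theorem relabel_mem (hc : ∀ v i, v ∈ l₁ i ↔ c v = i) (hperm : ∀ i, (l₁ i).Perm (l₂ i))
    (v : V) : relabel c l₁ l₂ v ∈ l₂ (c v) := by
  have hlt : (l₁ (c v)).idxOf v < (l₂ (c v)).length :=
    (hperm _).length_eq ▸ List.idxOf_lt_length_iff.2 ((hc v _).2 rfl)
  rw [relabel, List.getD_eq_getElem _ _ hlt]
  exact List.getElem_mem _

theorem getElem_mem_image_relabel_iff (hc : ∀ v i, v ∈ l₁ i ↔ c v = i)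
    (hperm : ∀ i, (l₁ i).Perm (l₂ i)) (hnd : ∀ i, (l₁ i).Nodup) {σ : Finset V} {i : Fin k}
    {j : ℕ} (hj : j < (l₁ i).length) :
    (l₂ i)[j]'((hperm i).length_eq ▸ hj) ∈ σ.image (relabel c l₁ l₂) ↔ (l₁ i)[j] ∈ σ := by
  refine ⟨fun hmem => ?_, fun h => Finset.mem_image.2 ⟨_, h, relabel_getElem hc hperm hnd hj⟩⟩
  obtain ⟨w, hw, hwj⟩ := Finset.mem_image.1 hmem
  have hl₂ : ∀ v i, v ∈ l₂ i ↔ c v = i := fun v i => (hperm i).mem_iff.symm.trans (hc v i)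
  have hwi : c w = i := by
    rw [← (hl₂ _ _).1 (relabel_mem hc hperm w), hwj]
    exact (hl₂ _ _).1 (List.getElem_mem _)
  obtain ⟨j', hj', hwj'⟩ := List.getElem_of_mem ((hc w i).2 hwi)
  rw [← hwj', relabel_getElem hc hperm hnd hj'] at hwj
  obtain rfl := ((hperm i).nodup_iff.1 (hnd i)).getElem_inj_iff.1 hwj
  rwa [hwj']

theorem exists_mem_faces_eVec_eq (Δ : SimpComplex V) (hc : ∀ v i, v ∈ l₁ i ↔ c v = i)
    (hperm : ∀ i, (l₁ i).Perm (l₂ i)) (hnd : ∀ i, (l₁ i).Nodup)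
    (hn₁ : IsNestingOrdered Δ l₁) (hn₂ : IsNestingOrdered Δ l₂) {σ : Finset V}
    (hσ : σ ∈ Δ.faces) : ∃ τ ∈ Δ.faces, ∀ i, eVec l₂ τ i = eVec l₁ σ i := by
  refine ⟨σ.image (relabel c l₁ l₂), Δ.image_mem_faces _ hσ fun v _ => ?_, fun i => ?_⟩
  · obtain ⟨i, hi⟩ : ∃ i, c v = i := ⟨_, rfl⟩
    obtain ⟨j, hj, rfl⟩ := List.getElem_of_mem ((hc v i).2 hi)
    rw [relabel_getElem hc hperm hnd hj]
    exact List.apply_getElem_le_of_perm (hperm i) (hnd i) (hn₁ i) (hn₂ i) hj _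
  · refine eVec_eq_of_map_eq (List.ext_getElem (by simp [(hperm i).length_eq]) fun j h₂ h₁ => ?_)
    simp only [List.getElem_map, getElem_mem_image_relabel_iff hc hperm hnd (by simpa using h₁)]

theorem uniformFaceIdeal_le (K : Type) [Field K] (Δ : SimpComplex V) {C : Fin k → Finset V}
    (hC : IsPartition C) (h₁ : ∀ i, (l₁ i).Nodup ∧ ∀ v, v ∈ l₁ i ↔ v ∈ C i)
    (h₂ : ∀ i, (l₂ i).Nodup ∧ ∀ v, v ∈ l₂ i ↔ v ∈ C i)
    (hn₁ : IsNestingOrdered Δ l₁) (hn₂ : IsNestingOrdered Δ l₂) :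
    uniformFaceIdeal K Δ l₁ ≤ uniformFaceIdeal K Δ l₂ := by
  choose c hc using fun v => (hC v).exists
  have hcol : ∀ v i, v ∈ l₁ i ↔ c v = i := fun v i => by
    rw [(h₁ i).2]
    exact ⟨fun hv => (hC v).unique (hc v) hv, fun h => h ▸ hc v⟩
  have hperm : ∀ i, (l₁ i).Perm (l₂ i) := fun i =>
    (List.perm_ext_iff_of_nodup (h₁ i).1 (h₂ i).1).2 fun v =>
      ((h₁ i).2 v).trans ((h₂ i).2 v).symm
  refine Ideal.span_le.2 ?_
  rintro _ ⟨σ, hσ, rfl⟩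
  obtain ⟨τ, hτ, he⟩ :=
    exists_mem_faces_eVec_eq Δ hcol hperm (fun i => (h₁ i).1) hn₁ hn₂ hσ
  rw [uniformMonomial_eq_of_eVec_eq K (fun i => (hperm i).length_eq) fun i => (he i).symm]
  exact Ideal.subset_span ⟨τ, hτ, rfl⟩

end UniformFaceIdeal

theorem stmt3_general {n k : ℕ} (K : Type) [Field K] (Δ : SimpComplex (Fin n))
    (C : Fin k → Finset (Fin n)) (hC : IsProperColouring Δ C)
    (l₁ l₂ : Fin k → List (Fin n))
    (h₁ : ∀ i, (l₁ i).Nodup ∧ ∀ v, v ∈ l₁ i ↔ v ∈ C i)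
    (h₂ : ∀ i, (l₂ i).Nodup ∧ ∀ v, v ∈ l₂ i ↔ v ∈ C i)
    (hn₁ : IsNestingOrdered Δ l₁) (hn₂ : IsNestingOrdered Δ l₂) :
    uniformFaceIdeal K Δ l₁ = uniformFaceIdeal K Δ l₂ :=
  (uniformFaceIdeal_le K Δ hC.1 h₁ h₂ hn₁ hn₂).antisymm
    (uniformFaceIdeal_le K Δ hC.1 h₂ h₁ hn₂ hn₁)

/-- Lemma 4.4: if `𝒞` is a nested colouring of `Δ` and `l₁`, `l₂` are two
(possibly distinct) nesting orders on the colour classes of `𝒞`, then the resulting uniform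
face ideals coincide. -/
theorem stmt3 {n k : ℕ} (K : Type) [Field K] (Δ : SimpComplex (Fin n))
    (C : Fin k → Finset (Fin n)) (hC : IsProperColouring Δ C)
    (hnested : ∀ i, IsNestedSet Δ (C i : Set (Fin n)))
    (l₁ l₂ : Fin k → List (Fin n))
    (h₁ : ∀ i, (l₁ i).Nodup ∧ ∀ v, v ∈ l₁ i ↔ v ∈ C i)
    (h₂ : ∀ i, (l₂ i).Nodup ∧ ∀ v, v ∈ l₂ i ↔ v ∈ C i)
    (hn₁ : IsNestingOrdered Δ l₁) (hn₂ : IsNestingOrdered Δ l₂) :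
    uniformFaceIdeal K Δ l₁ = uniformFaceIdeal K Δ l₂ :=
  stmt3_general K Δ C hC l₁ l₂ h₁ h₂ hn₁ hn₂
end

section
/- Let Δ and Γ be simplicial complexes. If 𝒞 = C_1 ⊔ ⋯ ⊔ C_k and 𝒟 = D_1 ⊔ ⋯ ⊔ D_k are ordered proper vertex k-colourings of Δ and Γ respectively, then the product of uniform face ideals is again a uniform face ideal: I(Δ, 𝒞) · I(Γ, 𝒟) = I(Σ, ℰ) for some simplicial complex Σ and some ordered proper vertex k-colouring ℰ of Σ with #E_i = #C_i + #D_i for each i. -/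
open MvPolynomial

/-! A uniform monomial depends on a face only through its index vector, and multiplying
uniform monomials adds both the index vectors and the class sizes. Hence the product ideal is
generated by the monomials of the vectors `e(σ) + e(τ)` with `σ ∈ Δ`, `τ ∈ Γ`, for class sizes
`#C_i + #D_i`. Concatenating the `i`-th classes of `C` and `D` gives classes `E_i` of that size,
and the sets choosing the `(e(σ) + e(τ))_i`-th vertex of each `E_i` form a complex `Σ`: the index
vectors of a complex are closed under zeroing coordinates, and so are their sums. -/

open Pointwise

theorem List.findIdx_congr {α : Type*} {l : List α} {p q : α → Bool}
    (h : ∀ a ∈ l, p a = q a) : l.findIdx p = l.findIdx q := by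
  induction l with
  | nil => rfl
  | cons a l ih =>
    rw [findIdx_cons, findIdx_cons, h a mem_cons_self,
      ih fun b hb => h b (mem_cons_of_mem a hb)]

theorem Fin.castAdd_ne_natAdd {n m : ℕ} (x : Fin n) (y : Fin m) :
    Fin.castAdd m x ≠ Fin.natAdd n y := by
  simp only [ne_eq, Fin.ext_iff, Fin.val_castAdd, Fin.val_natAdd]
  omega

theorem pairwise_disjoint_of_existsUnique_mem {V ι : Type*} {C : ι → List V}
    (hC : ∀ v, ∃! i, v ∈ C i) : Pairwise fun i j => (C i).Disjoint (C j) :=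
  fun _ _ hij _ hi hj => hij ((hC _).unique hi hj)

theorem eq_of_mem_of_pairwise_disjoint {V ι : Type*} {C : ι → List V}
    (hC : Pairwise fun i j => (C i).Disjoint (C j)) {i j : ι} {v : V}
    (hi : v ∈ C i) (hj : v ∈ C j) : i = j :=
  by_contra fun hij => hC hij hi hj

section IndexVector

variable {V : Type} [DecidableEq V] {k : ℕ}

theorem eVec_le_length (C : Fin k → List V) (σ : Finset V) (i : Fin k) :
    eVec C σ i ≤ (C i).length := by
  unfold eVec
  split_ifs with h
  · have := List.findIdx_lt_length_of_exists (List.any_eq_true.mp h)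
    omega
  · omega

theorem eVec_eq_zero_of_forall_notMem {C : Fin k → List V} {σ : Finset V} {i : Fin k}
    (h : ∀ v ∈ C i, v ∉ σ) : eVec C σ i = 0 := by
  simp only [eVec, List.any_eq_true, decide_eq_true_eq]
  rw [if_neg fun ⟨v, hv, hvσ⟩ => h v hv hvσ]

@[simp]
theorem eVec_empty (C : Fin k → List V) : eVec C ∅ = 0 :=
  funext fun _ => eVec_eq_zero_of_forall_notMem fun _ _ => Finset.notMem_empty _

theorem eVec_congr {C : Fin k → List V} {σ τ : Finset V} {i : Fin k}
    (h : ∀ v ∈ C i, v ∈ σ ↔ v ∈ τ) : eVec C σ i = eVec C τ i := by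
  have hp : ∀ v ∈ C i, decide (v ∈ σ) = decide (v ∈ τ) := fun v hv =>
    decide_eq_decide.mpr (h v hv)
  have hany : ((C i).any fun v => decide (v ∈ σ)) = (C i).any fun v => decide (v ∈ τ) := by
    rw [Bool.eq_iff_iff, List.any_eq_true, List.any_eq_true]
    exact exists_congr fun v => and_congr_right fun hv => by rw [hp v hv]
  rw [eVec, eVec, hany, List.findIdx_congr hp]

theorem eVec_eq_of_getElem {C : Fin k → List V} {σ : Finset V} {i : Fin k} {j : ℕ}
    (hj : j < (C i).length) (hmem : (C i)[j] ∈ σ)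
    (hfirst : ∀ j' (hj' : j' < j), (C i)[j'] ∉ σ) : eVec C σ i = j + 1 := by
  have hany : (C i).any (fun v => decide (v ∈ σ)) := by
    simpa only [List.any_eq_true, decide_eq_true_eq] using ⟨_, List.getElem_mem hj, hmem⟩
  rw [eVec, if_pos hany, (List.findIdx_eq hj).mpr]
  exact ⟨decide_eq_true hmem, fun j' hj' => decide_eq_false (hfirst j' hj')⟩

theorem eVec_filter {C : Fin k → List V} (hC : Pairwise fun i j => (C i).Disjoint (C j))
    (s : Set (Fin k)) [DecidablePred (· ∈ s)] (σ : Finset V) :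
    eVec C (σ.filter fun v => ∀ j, v ∈ C j → j ∈ s) = s.indicator (eVec C σ) := by
  funext i
  rw [Set.indicator_apply]
  split_ifs with hi
  · refine eVec_congr fun v hv => ?_
    rw [Finset.mem_filter, and_iff_left_iff_imp]
    intro _ j hj
    exact eq_of_mem_of_pairwise_disjoint hC hv hj ▸ hi
  · exact eVec_eq_zero_of_forall_notMem fun v hv hvσ => hi ((Finset.mem_filter.mp hvσ).2 i hv)

end IndexVector

section IndexFace

variable {V : Type} [DecidableEq V] {k : ℕ}

-- `g i = 0` selects no vertex of `E i`, otherwise its `g i`-th one counting from 1, as in `eVec`.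
def indexFace (E : Fin k → List V) (g : Fin k → ℕ) : Finset V :=
  Finset.univ.biUnion fun i => if g i = 0 then ∅ else ((E i)[g i - 1]?).toFinset

theorem mem_indexFace {E : Fin k → List V} {g : Fin k → ℕ} {v : V} :
    v ∈ indexFace E g ↔ ∃ i, g i ≠ 0 ∧ (E i)[g i - 1]? = some v := by
  simp only [indexFace, Finset.mem_biUnion, Finset.mem_univ, true_and]
  refine exists_congr fun i => ?_
  split_ifs with h <;> simp [h]

@[simp]
theorem indexFace_zero (E : Fin k → List V) : indexFace E 0 = ∅ := by
  ext v
  simp [mem_indexFace]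

theorem eVec_indexFace {E : Fin k → List V} (hnd : ∀ i, (E i).Nodup)
    (hE : Pairwise fun i j => (E i).Disjoint (E j)) {g : Fin k → ℕ}
    (hg : g ≤ fun i => (E i).length) : eVec E (indexFace E g) = g := by
  funext i
  by_cases h0 : g i = 0
  · rw [h0]
    refine eVec_eq_zero_of_forall_notMem fun v hv hvf => ?_
    obtain ⟨j, hj0, hjv⟩ := mem_indexFace.mp hvf
    exact hj0 (eq_of_mem_of_pairwise_disjoint hE (List.mem_of_getElem? hjv) hv ▸ h0)
  · have hlt : g i - 1 < (E i).length := by have : g i ≤ (E i).length := hg i; omega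
    rw [eVec_eq_of_getElem hlt (mem_indexFace.mpr ⟨i, h0, List.getElem?_eq_getElem hlt⟩)]
    · omega
    · intro j hj hjf
      obtain ⟨i', -, hi'v⟩ := mem_indexFace.mp hjf
      obtain rfl :=
        eq_of_mem_of_pairwise_disjoint hE (List.mem_of_getElem? hi'v) (List.getElem_mem _)
      rw [List.getElem?_eq_getElem hlt, Option.some_inj, (hnd i').getElem_inj_iff] at hi'v
      omega

theorem exists_indicator_of_subset_indexFace {E : Fin k → List V} {g : Fin k → ℕ}
    {ρ : Finset V} (hρ : ρ ⊆ indexFace E g) :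
    ∃ s : Set (Fin k), ρ = indexFace E (s.indicator g) := by
  classical
  refine ⟨{i | ∃ v ∈ ρ, g i ≠ 0 ∧ (E i)[g i - 1]? = some v}, Finset.ext fun v => ?_⟩
  simp only [mem_indexFace, Set.indicator_apply, Set.mem_ofPred_eq]
  constructor
  · intro hv
    obtain ⟨i, h0, hi⟩ := mem_indexFace.mp (hρ hv)
    refine ⟨i, ?_⟩
    rw [if_pos ⟨v, hv, h0, hi⟩]
    exact ⟨h0, hi⟩
  · rintro ⟨i, hi⟩
    split_ifs at hi with hs
    · obtain ⟨w, hw, -, hiw⟩ := hs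
      rwa [← Option.some_inj.mp (hiw.symm.trans hi.2)]
    · exact absurd rfl hi.1

end IndexFace

def IndicatorClosed {ι M : Type*} [Zero M] (G : Set (ι → M)) : Prop :=
  ∀ g ∈ G, ∀ s : Set ι, s.indicator g ∈ G

theorem IndicatorClosed.add {ι M : Type*} [AddZeroClass M] {G H : Set (ι → M)}
    (hG : IndicatorClosed G) (hH : IndicatorClosed H) : IndicatorClosed (G + H) := by
  rintro _ ⟨g, hg, h, hh, rfl⟩ s
  rw [Set.indicator_add']
  exact Set.add_mem_add (hG g hg s) (hH h hh s)

section IndexVectors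

variable {V : Type} [DecidableEq V] {k : ℕ}

def indexVectors (Δ : SimpComplex V) (C : Fin k → List V) : Set (Fin k → ℕ) :=
  eVec C '' Δ.faces

theorem zero_mem_indexVectors (Δ : SimpComplex V) (C : Fin k → List V) :
    0 ∈ indexVectors Δ C :=
  ⟨∅, Δ.empty_mem, eVec_empty C⟩

theorem indicatorClosed_indexVectors (Δ : SimpComplex V) {C : Fin k → List V}
    (hC : Pairwise fun i j => (C i).Disjoint (C j)) : IndicatorClosed (indexVectors Δ C) := by
  classical
  rintro _ ⟨σ, hσ, rfl⟩ s
  exact ⟨_, Δ.down_closed hσ (Finset.filter_subset _ σ), eVec_filter hC s σ⟩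

theorem indexVectors_le_length (Δ : SimpComplex V) (C : Fin k → List V) :
    ∀ g ∈ indexVectors Δ C, g ≤ fun i => (C i).length := by
  rintro _ ⟨σ, -, rfl⟩
  exact eVec_le_length C σ

def SimpComplex.ofIndexVectors (E : Fin k → List V) (G : Set (Fin k → ℕ)) (h0 : 0 ∈ G)
    (hG : IndicatorClosed G) : SimpComplex V where
  faces := indexFace E '' G
  empty_mem := ⟨0, h0, indexFace_zero E⟩
  down_closed := by
    rintro _ ρ ⟨g, hg, rfl⟩ hρ
    obtain ⟨s, rfl⟩ := exists_indicator_of_subset_indexFace hρ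
    exact ⟨_, hG g hg s, rfl⟩

theorem SimpComplex.isOrderedColouring_ofIndexVectors {E : Fin k → List V}
    (hnd : ∀ i, (E i).Nodup) (hE : ∀ v, ∃! i, v ∈ E i) {G : Set (Fin k → ℕ)} (h0 : 0 ∈ G)
    (hG : IndicatorClosed G) : IsOrderedColouring (ofIndexVectors E G h0 hG) E := by
  have hdisj := pairwise_disjoint_of_existsUnique_mem hE
  refine ⟨hnd, hE, fun i u hu v hv huv ρ hρ ⟨huρ, hvρ⟩ => ?_⟩
  obtain ⟨g, -, rfl⟩ := hρ
  obtain ⟨iu, -, hgu⟩ := mem_indexFace.mp huρ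
  obtain ⟨iv, -, hgv⟩ := mem_indexFace.mp hvρ
  obtain rfl := eq_of_mem_of_pairwise_disjoint hdisj (List.mem_of_getElem? hgu) hu
  obtain rfl := eq_of_mem_of_pairwise_disjoint hdisj (List.mem_of_getElem? hgv) hv
  exact huv (Option.some_inj.mp (hgu.symm.trans hgv))

end IndexVectors

section IndexIdeal

variable (R : Type*) [CommSemiring R] {k : ℕ}

noncomputable def indexMonomial (l e : Fin k → ℕ) : MvPolynomial (Fin k ⊕ Fin k) R :=
  ∏ i, X (Sum.inl i) ^ (l i - e i) * X (Sum.inr i) ^ e i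

noncomputable def indexIdeal (l : Fin k → ℕ) (G : Set (Fin k → ℕ)) :
    Ideal (MvPolynomial (Fin k ⊕ Fin k) R) :=
  Ideal.span (indexMonomial R l '' G)

variable {R}

theorem indexMonomial_mul {l l' e e' : Fin k → ℕ} (he : e ≤ l) (he' : e' ≤ l') :
    indexMonomial R l e * indexMonomial R l' e' = indexMonomial R (l + l') (e + e') := by
  rw [indexMonomial, indexMonomial, indexMonomial, ← Finset.prod_mul_distrib]
  refine Finset.prod_congr rfl fun i _ => ?_
  have hsub : (l + l') i - (e + e') i = (l i - e i) + (l' i - e' i) := by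
    simp only [Pi.add_apply]
    have h : e i ≤ l i := he i
    have h' : e' i ≤ l' i := he' i
    omega
  rw [hsub, Pi.add_apply, pow_add, pow_add]
  ring

theorem indexIdeal_mul {l l' : Fin k → ℕ} {G H : Set (Fin k → ℕ)}
    (hG : ∀ g ∈ G, g ≤ l) (hH : ∀ h ∈ H, h ≤ l') :
    indexIdeal R l G * indexIdeal R l' H = indexIdeal R (l + l') (G + H) := by
  rw [indexIdeal, indexIdeal, indexIdeal, Ideal.span_mul_span']
  congr 1
  ext p
  simp only [Set.mem_mul, Set.mem_add, Set.mem_image]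
  constructor
  · rintro ⟨_, ⟨g, hg, rfl⟩, _, ⟨h, hh, rfl⟩, rfl⟩
    exact ⟨g + h, ⟨g, hg, h, hh, rfl⟩, (indexMonomial_mul (hG g hg) (hH h hh)).symm⟩
  · rintro ⟨_, ⟨g, hg, h, hh, rfl⟩, rfl⟩
    exact ⟨_, ⟨g, hg, rfl⟩, _, ⟨h, hh, rfl⟩, indexMonomial_mul (hG g hg) (hH h hh)⟩

end IndexIdeal

section UniformFaceIdeal

variable (K : Type) [Field K] {V : Type} [DecidableEq V] {k : ℕ}

theorem uniformFaceIdeal_eq_indexIdeal (Δ : SimpComplex V) (C : Fin k → List V) :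
    uniformFaceIdeal K Δ C = indexIdeal K (fun i => (C i).length) (indexVectors Δ C) := by
  rw [uniformFaceIdeal, indexIdeal, indexVectors, Set.image_image]
  congr 1
  ext p
  simp only [Set.mem_ofPred_eq, Set.mem_image, eq_comm (a := p)]
  rfl

theorem uniformFaceIdeal_ofIndexVectors {E : Fin k → List V} (hnd : ∀ i, (E i).Nodup)
    (hE : Pairwise fun i j => (E i).Disjoint (E j)) {G : Set (Fin k → ℕ)} (h0 : 0 ∈ G)
    (hG : IndicatorClosed G) (hle : ∀ g ∈ G, g ≤ fun i => (E i).length) :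
    uniformFaceIdeal K (SimpComplex.ofIndexVectors E G h0 hG) E =
      indexIdeal K (fun i => (E i).length) G := by
  rw [uniformFaceIdeal_eq_indexIdeal]
  congr
  ext g
  constructor
  · rintro ⟨_, ⟨g', hg', rfl⟩, rfl⟩
    rwa [eVec_indexFace hnd hE (hle g' hg')]
  · intro hg
    exact ⟨indexFace E g, ⟨g, hg, rfl⟩, eVec_indexFace hnd hE (hle g hg)⟩

end UniformFaceIdeal

section AppendClasses

variable {n m k : ℕ}

def appendClasses (C : Fin k → List (Fin n)) (D : Fin k → List (Fin m)) (i : Fin k) :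
    List (Fin (n + m)) :=
  (C i).map (Fin.castAdd m) ++ (D i).map (Fin.natAdd n)

variable {C : Fin k → List (Fin n)} {D : Fin k → List (Fin m)}

theorem length_appendClasses (i : Fin k) :
    (appendClasses C D i).length = (C i).length + (D i).length := by
  simp [appendClasses]

theorem nodup_appendClasses (hC : ∀ i, (C i).Nodup) (hD : ∀ i, (D i).Nodup) (i : Fin k) :
    (appendClasses C D i).Nodup := by
  refine ((hC i).map (Fin.castAdd_injective n m)).append ((hD i).map (Fin.natAdd_injective m n))
    fun v hvC hvD => ?_
  obtain ⟨x, -, rfl⟩ := List.mem_map.mp hvC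
  obtain ⟨y, -, hy⟩ := List.mem_map.mp hvD
  exact Fin.castAdd_ne_natAdd x y hy.symm

theorem existsUnique_mem_appendClasses (hC : ∀ v, ∃! i, v ∈ C i) (hD : ∀ v, ∃! i, v ∈ D i)
    (v : Fin (n + m)) : ∃! i, v ∈ appendClasses C D i := by
  induction v using Fin.addCases with
  | left x =>
    simpa [appendClasses, fun y => (Fin.castAdd_ne_natAdd x y).symm] using hC x
  | right y =>
    simpa [appendClasses, fun x => Fin.castAdd_ne_natAdd x y] using hD y

end AppendClasses

/-- Proposition 4.6: the product of two uniform face ideals (with respect to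
ordered proper vertex `k`-colourings) is again a uniform face ideal, with respect to an ordered
proper vertex `k`-colouring whose classes have sizes `#E_i = #C_i + #D_i`. -/
theorem stmt4 {n m k : ℕ} (K : Type) [Field K]
    (Δ : SimpComplex (Fin n)) (Γ : SimpComplex (Fin m))
    (C : Fin k → List (Fin n)) (D : Fin k → List (Fin m))
    (hC : IsOrderedColouring Δ C) (hD : IsOrderedColouring Γ D) :
    ∃ (N : ℕ) (S : SimpComplex (Fin N)) (E : Fin k → List (Fin N)),
      IsOrderedColouring S E ∧
      (∀ i, (E i).length = (C i).length + (D i).length) ∧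
      uniformFaceIdeal K Δ C * uniformFaceIdeal K Γ D = uniformFaceIdeal K S E := by
  obtain ⟨hCnd, hCpart, -⟩ := hC
  obtain ⟨hDnd, hDpart, -⟩ := hD
  set E := appendClasses C D
  have hEnd : ∀ i, (E i).Nodup := nodup_appendClasses hCnd hDnd
  have hEpart : ∀ v, ∃! i, v ∈ E i := existsUnique_mem_appendClasses hCpart hDpart
  have hElen : (fun i => (E i).length) = (fun i => (C i).length) + fun i => (D i).length :=
    funext length_appendClasses
  set G := indexVectors Δ C + indexVectors Γ D
  have hG0 : 0 ∈ G := zero_add (0 : Fin k → ℕ) ▸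
    Set.add_mem_add (zero_mem_indexVectors Δ C) (zero_mem_indexVectors Γ D)
  have hG : IndicatorClosed G :=
    (indicatorClosed_indexVectors Δ (pairwise_disjoint_of_existsUnique_mem hCpart)).add
      (indicatorClosed_indexVectors Γ (pairwise_disjoint_of_existsUnique_mem hDpart))
  have hGle : ∀ g ∈ G, g ≤ fun i => (E i).length := by
    rintro _ ⟨g, hg, h, hh, rfl⟩
    rw [hElen]
    exact add_le_add (indexVectors_le_length Δ C g hg) (indexVectors_le_length Γ D h hh)
  refine ⟨n + m, .ofIndexVectors E G hG0 hG, E,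
    SimpComplex.isOrderedColouring_ofIndexVectors hEnd hEpart hG0 hG, length_appendClasses, ?_⟩
  rw [uniformFaceIdeal_eq_indexIdeal, uniformFaceIdeal_eq_indexIdeal,
    indexIdeal_mul (indexVectors_le_length Δ C) (indexVectors_le_length Γ D),
    uniformFaceIdeal_ofIndexVectors K hEnd (pairwise_disjoint_of_existsUnique_mem hEpart) hG0 hG
      hGle, hElen]
end

section
/- Let Δ be a simplicial complex on [n] and let 𝒮 = {1} ⊔ ⋯ ⊔ {n} be the singleton colouring of Δ. If J is the Stanley–Reisner ideal of the Alexander dual (Δ_𝒮)^∨ of the complex Δ_𝒮, where the vertex i is associated to the variable x_i and the vertex i′ is associated to the variable y_i for each i ∈ [n], then J = I(Δ, 𝒮). -/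
open MvPolynomial

/-- The Biermann–Van Tuyl complex `Δ_𝒮` for the singleton colouring: the complex on the
vertex set `[n] ⊔ {1',…,n'}` (encoded as `Fin n ⊕ Fin n`, with `Sum.inl i = i` and
`Sum.inr i = i'`) whose faces are the sets `σ ∪ τ` with `σ ∈ Δ` and
`τ ⊆ {j' : j ∉ σ}`. -/
def deltaS {n : ℕ} (Δ : SimpComplex (Fin n)) : SimpComplex (Fin n ⊕ Fin n) where
  faces := {F | (Finset.univ.filter (fun i => Sum.inl i ∈ F)) ∈ Δ.faces ∧
      ∀ j : Fin n, Sum.inr j ∈ F → Sum.inl j ∉ F}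
  empty_mem := by
    constructor
    · simpa using Δ.empty_mem
    · simp
  down_closed := by
    intro F F' hF hsub
    refine ⟨Δ.down_closed hF.1 ?_, fun j hj hl => hF.2 j (hsub hj) (hsub hl)⟩
    intro i hi
    simp only [Finset.mem_filter] at hi ⊢
    exact ⟨hi.1, hsub hi.2⟩

/-- The set of faces of the Alexander dual of a complex on the finite vertex type `V`:
the complements of the non-faces. -/
def dualFaces {V : Type} [Fintype V] [DecidableEq V] (Γ : SimpComplex V) :
    Set (Finset V) :=
  {F | Fᶜ ∉ Γ.faces}

/-- The Stanley–Reisner ideal of a collection of faces on the vertex type `V`, the vertices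
being identified with the variables of `MvPolynomial V K`: it is generated by the squarefree
monomials attached to the non-faces. -/
noncomputable def srIdealOfSet (K : Type) [Field K] {V : Type} (S : Set (Finset V)) :
    Ideal (MvPolynomial V K) :=
  Ideal.span {m | ∃ σ : Finset V, σ ∉ S ∧ m = ∏ v ∈ σ, X v}


/-! A set `G` of vertices is a non-face of `(Δ_𝒮)^∨` exactly when `Gᶜ ∈ Δ_𝒮`. Every face of `Δ_𝒮`
lies in one of the form `σ ∪ {j' : j ∉ σ}` with `σ ∈ Δ`, so the minimal non-faces of the dual
are the sets `{i : i ∉ σ} ∪ {i' : i ∈ σ}`, and the squarefree monomial of such a set is exactly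
the uniform monomial `m_σ`. -/

open Finset

theorem MvPolynomial.span_prod_X_eq_of_forall_exists_subset {V K : Type} [CommSemiring K]
    {A B : Set (Finset V)} (hBA : B ⊆ A) (hAB : ∀ s ∈ A, ∃ t ∈ B, t ⊆ s) :
    Ideal.span {m : MvPolynomial V K | ∃ s ∈ A, m = ∏ v ∈ s, X v} =
      Ideal.span {m | ∃ t ∈ B, m = ∏ v ∈ t, X v} := by
  classical
  refine le_antisymm (Ideal.span_le.2 ?_) (Ideal.span_mono ?_)
  · rintro _ ⟨s, hs, rfl⟩
    obtain ⟨t, ht, hts⟩ := hAB s hs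
    rw [← prod_sdiff hts]
    exact Ideal.mul_mem_left _ _ (Ideal.subset_span ⟨t, ht, rfl⟩)
  · rintro _ ⟨t, ht, rfl⟩
    exact ⟨t, hBA ht, rfl⟩

theorem eVec_singleton {n : ℕ} (σ : Finset (Fin n)) (i : Fin n) :
    eVec (fun i : Fin n => [i]) σ i = if i ∈ σ then 1 else 0 := by
  by_cases h : i ∈ σ <;> simp [eVec, h]

theorem uniformMonomial_singleton {n : ℕ} (K : Type) [Field K] (σ : Finset (Fin n)) :
    uniformMonomial K (fun i : Fin n => [i]) σ = ∏ v ∈ σᶜ.disjSum σ, X v := by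
  simp only [uniformMonomial, eVec_singleton, List.length_singleton, prod_disjSum,
    prod_mul_distrib, apply_ite (1 - ·), tsub_self, tsub_zero, pow_ite, pow_zero, pow_one]
  congr 1
  · rw [prod_ite, prod_const_one, one_mul, filter_not, filter_mem_eq_inter, univ_inter,
      compl_eq_univ_sdiff]
  · rw [prod_ite_mem, univ_inter]

theorem compl_disjSum_mem_deltaS {n : ℕ} {Δ : SimpComplex (Fin n)} {σ : Finset (Fin n)}
    (hσ : σ ∈ Δ.faces) : (σᶜ.disjSum σ)ᶜ ∈ (deltaS Δ).faces := by
  refine ⟨?_, fun j => ?_⟩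
  · convert hσ using 1
    ext i
    simp
  · simp

theorem disjSum_subset_of_compl_mem_deltaS {n : ℕ} {Δ : SimpComplex (Fin n)}
    {G : Finset (Fin n ⊕ Fin n)} (hG : Gᶜ ∈ (deltaS Δ).faces) :
    ∃ σ ∈ Δ.faces, σᶜ.disjSum σ ⊆ G := by
  refine ⟨univ.filter (fun i => Sum.inl i ∈ Gᶜ), hG.1, ?_⟩
  rintro (i | i) hv
  · simpa using hv
  · by_contra h
    exact hG.2 i (by simpa using h) (by simpa using hv)

/-- Proposition 4.8: for the singleton colouring `𝒮 = {1} ⊔ ⋯ ⊔ {n}`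
(encoded by the lists `fun i => [i]`), the Stanley–Reisner ideal of the Alexander dual
`(Δ_𝒮)^∨` — vertex `i` corresponding to `x_i = X (Sum.inl i)` and vertex `i'` to
`y_i = X (Sum.inr i)` — equals the uniform face ideal `I(Δ, 𝒮)`. -/
theorem stmt5 {n : ℕ} (K : Type) [Field K] (Δ : SimpComplex (Fin n)) :
    srIdealOfSet K (dualFaces (deltaS Δ)) =
      uniformFaceIdeal K Δ (fun i : Fin n => [i]) := by
  have hsr : srIdealOfSet K (dualFaces (deltaS Δ)) =
      Ideal.span {m | ∃ G ∈ {G | Gᶜ ∈ (deltaS Δ).faces}, m = ∏ v ∈ G, X v} := by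
    simp [srIdealOfSet, dualFaces]
  have hunif : uniformFaceIdeal K Δ (fun i : Fin n => [i]) =
      Ideal.span {m | ∃ G ∈ (fun σ => σᶜ.disjSum σ) '' Δ.faces, m = ∏ v ∈ G, X v} := by
    simp [uniformFaceIdeal, uniformMonomial_singleton]
  rw [hsr, hunif]
  apply MvPolynomial.span_prod_X_eq_of_forall_exists_subset
  · rintro _ ⟨σ, hσ, rfl⟩
    exact compl_disjSum_mem_deltaS hσ
  · intro G hG
    obtain ⟨σ, hσ, hsub⟩ := disjSum_subset_of_compl_mem_deltaS hG
    exact ⟨_, ⟨σ, hσ, rfl⟩, hsub⟩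
end
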